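/- The uniform distribution on S is a stationary distribution of the money-exchange chain: for every ξ' ∈ S, ∑_{ξ ∈ S} (1/|S|)·p(ξ, ξ') = 1/|S|. -/
import Mathlib


open scoped Classical
open Finset

section MoneyExchange

variable {V : Type*} [Fintype V] [DecidableEq V] {K : ℕ}

/-- Move one coin from `x` to `y`. -/
def tau (x y : V) (ξ : V → ℤ) : V → ℤ :=
  fun z => ξ z - (if z = x then 1 else 0) + (if z = y then 1 else 0)

/-- Total (nonpositive) debt of the customers of bank `i`:
`∑_{z ∈ Vᵢ} ξ(z) · 1{ξ(z) < 0}`. -/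
def bankDebt (bank : V → Fin K) (ξ : V → ℤ) (i : Fin K) : ℤ :=
  ∑ z ∈ univ.filter fun z => bank z = i, min (ξ z) 0

/-- Admissible configurations: total money `M` and each bank lends at most `Rᵢ`. -/
def admissible (bank : V → Fin K) (R : Fin K → ℕ) (M : ℕ) (ξ : V → ℤ) : Prop :=
  (∑ z, ξ z) = (M : ℤ) ∧ ∀ i, -(R i : ℤ) ≤ bankDebt bank ξ i

/-- The move from `x` is allowed in `ξ`: `x` has a coin or its bank is nonempty. -/
def allowed (bank : V → Fin K) (R : Fin K → ℕ) (ξ : V → ℤ) (x : V) : Prop :=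
  0 < ξ x ∨ -(R (bank x) : ℤ) < bankDebt bank ξ (bank x)

/-- One-step transition probability of the money-exchange chain: each ordered
adjacent pair `(x, y)` is chosen with probability `1/(2|E|)`, and a coin moves
from `x` to `y` whenever the move from `x` is allowed; otherwise nothing happens. -/
noncomputable def step (G : SimpleGraph V) (bank : V → Fin K) (R : Fin K → ℕ)
    (ξ ξ' : V → ℤ) : ℝ :=
  (((univ.filter fun pq : V × V =>
        G.Adj pq.1 pq.2 ∧ allowed bank R ξ pq.1 ∧ tau pq.1 pq.2 ξ = ξ').card : ℝ)
      + if ξ' = ξ then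
          ((univ.filter fun pq : V × V =>
            G.Adj pq.1 pq.2 ∧ ¬ allowed bank R ξ pq.1).card : ℝ)
        else 0)
    / ((univ.filter fun pq : V × V => G.Adj pq.1 pq.2).card : ℝ)

/-- `t`-step transition probability of the money-exchange chain. -/
noncomputable def stepT (G : SimpleGraph V) (bank : V → Fin K) (R : Fin K → ℕ) :
    ℕ → (V → ℤ) → (V → ℤ) → ℝ
  | 0, ξ, ξ' => if ξ = ξ' then 1 else 0
  | t + 1, ξ, ξ' =>
      ∑ η ∈ insert ξ ((univ.filter fun pq : V × V => G.Adj pq.1 pq.2).image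
          fun pq => tau pq.1 pq.2 ξ),
        step G bank R ξ η * stepT G bank R t η ξ'

end MoneyExchange

set_option linter.unusedSectionVars false

section AuxLemmas

variable {V : Type*} [Fintype V] [DecidableEq V] {K : ℕ}

lemma tau_tau (x y : V) (ξ : V → ℤ) : tau y x (tau x y ξ) = ξ := by
  funext z; simp only [tau]; ring

lemma sum_tau (x y : V) (ξ : V → ℤ) : ∑ z, tau x y ξ z = ∑ z, ξ z := by
  simp only [tau, Finset.sum_add_distrib, Finset.sum_sub_distrib,
    Finset.sum_ite_eq' Finset.univ, Finset.mem_univ, if_true]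
  ring

lemma bankDebt_tau (bank : V → Fin K) {x y : V} (hxy : x ≠ y) (ξ : V → ℤ) (i : Fin K) :
    bankDebt bank (tau x y ξ) i = bankDebt bank ξ i
      + (if bank x = i then min (ξ x - 1) 0 - min (ξ x) 0 else 0)
      + (if bank y = i then min (ξ y + 1) 0 - min (ξ y) 0 else 0) := by
  unfold bankDebt
  rw [show (if bank x = i then min (ξ x - 1) 0 - min (ξ x) 0 else 0)
      = ∑ z ∈ univ.filter fun z => bank z = i,
          (if z = x then min (ξ x - 1) 0 - min (ξ x) 0 else 0) by
    rw [Finset.sum_ite_eq' (univ.filter fun z => bank z = i) x]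
    simp,
    show (if bank y = i then min (ξ y + 1) 0 - min (ξ y) 0 else 0)
      = ∑ z ∈ univ.filter fun z => bank z = i,
          (if z = y then min (ξ y + 1) 0 - min (ξ y) 0 else 0) by
    rw [Finset.sum_ite_eq' (univ.filter fun z => bank z = i) y]
    simp]
  rw [← Finset.sum_add_distrib, ← Finset.sum_add_distrib]
  refine Finset.sum_congr rfl fun z _ => ?_
  by_cases hzx : z = x
  · subst hzx
    have : z ≠ y := hxy
    simp [tau, this]
  · by_cases hzy : z = y
    · subst hzy; simp [tau, hzx]
    · simp [tau, hzx, hzy]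

lemma allowed_tau (bank : V → Fin K) (R : Fin K → ℕ) {M : ℕ} {ξ : V → ℤ} {x y : V}
    (hxy : x ≠ y) (hξ : admissible bank R M ξ) (hx : allowed bank R ξ x) :
    allowed bank R (tau x y ξ) y := by
  have hyy : tau x y ξ y = ξ y + 1 := by
    simp [tau, (show y ≠ x from fun h => hxy h.symm)]
  by_cases hy : 0 ≤ ξ y
  · exact Or.inl (by rw [hyy]; omega)
  · refine Or.inr ?_
    rw [bankDebt_tau bank hxy ξ (bank y), if_pos rfl]
    have hdy := hξ.2 (bank y)
    rcases hx with hx | hx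
    · by_cases hbxy : bank x = bank y
      · rw [if_pos hbxy]; omega
      · rw [if_neg hbxy]; omega
    · by_cases hbxy : bank x = bank y
      · rw [if_pos hbxy]; rw [hbxy] at hx; omega
      · rw [if_neg hbxy]; omega

lemma admissible_tau (bank : V → Fin K) (R : Fin K → ℕ) {M : ℕ} {ξ : V → ℤ} {x y : V}
    (hxy : x ≠ y) (hξ : admissible bank R M ξ) (hx : allowed bank R ξ x) :
    admissible bank R M (tau x y ξ) := by
  refine ⟨by rw [sum_tau]; exact hξ.1, fun i => ?_⟩
  rw [bankDebt_tau bank hxy ξ i]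
  have hdi := hξ.2 i
  rcases hx with hx | hx
  · split_ifs <;> omega
  · by_cases h1 : bank x = i
    · rw [h1] at hx
      rw [if_pos h1]
      split_ifs <;> omega
    · rw [if_neg h1]
      split_ifs <;> omega

lemma step_symm (G : SimpleGraph V) (bank : V → Fin K) (R : Fin K → ℕ) {M : ℕ}
    {ξ ξ' : V → ℤ} (hξ : admissible bank R M ξ) (hξ' : admissible bank R M ξ') :
    step G bank R ξ ξ' = step G bank R ξ' ξ := by
  by_cases h : ξ' = ξ
  · subst h; rfl
  · have hcard : (univ.filter fun pq : V × V =>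
          G.Adj pq.1 pq.2 ∧ allowed bank R ξ pq.1 ∧ tau pq.1 pq.2 ξ = ξ').card
        = (univ.filter fun pq : V × V =>
          G.Adj pq.1 pq.2 ∧ allowed bank R ξ' pq.1 ∧ tau pq.1 pq.2 ξ' = ξ).card := by
      refine Finset.card_bij' (fun pq _ => pq.swap) (fun pq _ => pq.swap) ?_ ?_ ?_ ?_
      · rintro ⟨a, b⟩ hab
        simp only [Finset.mem_filter, Finset.mem_univ, true_and, Prod.fst_swap, Prod.snd_swap] at hab ⊢
        obtain ⟨hadj, hall, htau⟩ := hab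
        refine ⟨hadj.symm, ?_, ?_⟩
        · exact htau ▸ allowed_tau bank R hadj.ne hξ hall
        · rw [← htau, tau_tau]
      · rintro ⟨a, b⟩ hab
        simp only [Finset.mem_filter, Finset.mem_univ, true_and, Prod.fst_swap, Prod.snd_swap] at hab ⊢
        obtain ⟨hadj, hall, htau⟩ := hab
        refine ⟨hadj.symm, ?_, ?_⟩
        · exact htau ▸ allowed_tau bank R hadj.ne hξ' hall
        · rw [← htau, tau_tau]
      · intro a _; rfl
      · intro a _; rfl
    unfold step
    rw [if_neg h, if_neg (Ne.symm h), hcard]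

lemma exists_adj_pair (G : SimpleGraph V) (hG : G.Connected) (hN : 2 ≤ Fintype.card V) :
    (univ.filter fun pq : V × V => G.Adj pq.1 pq.2).Nonempty := by
  obtain ⟨x, y, hxy⟩ := Fintype.exists_pair_of_one_lt_card (α := V) (by omega)
  obtain ⟨w⟩ := hG x y
  cases w with
  | nil => exact absurd rfl hxy
  | cons h p =>
      exact ⟨(_, _), by simp only [Finset.mem_filter, Finset.mem_univ, true_and]; exact h⟩

lemma step_row_sum (G : SimpleGraph V) (bank : V → Fin K) (R : Fin K → ℕ) {M : ℕ}
    (hA : (univ.filter fun pq : V × V => G.Adj pq.1 pq.2).Nonempty)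
    {ξ' : V → ℤ} (hξ' : admissible bank R M ξ')
    (Sfin : Finset (V → ℤ)) (hSfin : ∀ ξ, ξ ∈ Sfin ↔ admissible bank R M ξ) :
    ∑ η ∈ Sfin, step G bank R ξ' η = 1 := by
  classical
  have hAcard : ((univ.filter fun pq : V × V => G.Adj pq.1 pq.2).card : ℝ) ≠ 0 := by
    exact_mod_cast Finset.card_pos.2 hA |>.ne'
  unfold step
  rw [← Finset.sum_div, Finset.sum_add_distrib]
  have h1 : (∑ η ∈ Sfin, if η = ξ' then
        (((univ.filter fun pq : V × V =>
          G.Adj pq.1 pq.2 ∧ ¬ allowed bank R ξ' pq.1).card : ℝ)) else 0)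
      = (((univ.filter fun pq : V × V => G.Adj pq.1 pq.2).filter
          fun pq => ¬ allowed bank R ξ' pq.1).card : ℝ) := by
    rw [Finset.sum_ite_eq' Sfin ξ', if_pos ((hSfin ξ').2 hξ'), Finset.filter_filter]
  have h2 : (∑ η ∈ Sfin, ((univ.filter fun pq : V × V =>
        G.Adj pq.1 pq.2 ∧ allowed bank R ξ' pq.1 ∧ tau pq.1 pq.2 ξ' = η).card : ℝ))
      = ((((univ.filter fun pq : V × V => G.Adj pq.1 pq.2).filter
          fun pq => allowed bank R ξ' pq.1).card : ℝ)) := by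
    rw [← Nat.cast_sum]
    congr 1
    have hmem : ∀ pq ∈ (univ.filter fun pq : V × V => G.Adj pq.1 pq.2).filter
        fun pq => allowed bank R ξ' pq.1, tau pq.1 pq.2 ξ' ∈ Sfin := by
      rintro ⟨a, b⟩ hab
      simp only [Finset.mem_filter, Finset.mem_univ, true_and] at hab
      exact (hSfin _).2 (admissible_tau bank R hab.1.ne hξ' hab.2)
    rw [Finset.card_eq_sum_card_fiberwise hmem]
    refine (Finset.sum_congr rfl fun η _ => ?_).symm
    rw [Finset.filter_filter, Finset.filter_filter]
  rw [h1, h2, ← Nat.cast_add,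
    Finset.card_filter_add_card_filter_not
      (s := univ.filter fun pq : V × V => G.Adj pq.1 pq.2)
      (p := fun pq => allowed bank R ξ' pq.1),
    div_self hAcard]

lemma admissible_finite (bank : V → Fin K) (R : Fin K → ℕ) (M : ℕ) :
    Finite {ξ : V → ℤ // admissible bank R M ξ} := by
  classical
  set C : ℤ := ∑ i, (R i : ℤ) with hC
  have hC0 : 0 ≤ C := Finset.sum_nonneg fun i _ => by positivity
  have hbound : ∀ ξ : V → ℤ, admissible bank R M ξ → ∀ z,
      ξ z ∈ Set.Icc (-C) ((M : ℤ) + Fintype.card V * C) := by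
    intro ξ hξ z
    have hlow : ∀ w : V, -C ≤ ξ w := by
      intro w
      have hwmem : w ∈ univ.filter fun z => bank z = bank w :=
        Finset.mem_filter.2 ⟨Finset.mem_univ w, rfl⟩
      have h1 : bankDebt bank ξ (bank w) ≤ min (ξ w) 0 := by
        unfold bankDebt
        rw [← Finset.add_sum_erase _ _ hwmem]
        have : ∑ z ∈ (univ.filter fun z => bank z = bank w).erase w, min (ξ z) 0 ≤ 0 :=
          Finset.sum_nonpos fun z _ => min_le_right _ _
        omega
      have h2 : (R (bank w) : ℤ) ≤ C :=
        Finset.single_le_sum (f := fun i => (R i : ℤ))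
          (fun i _ => by positivity) (Finset.mem_univ _)
      have h3 := hξ.2 (bank w)
      have h4 : min (ξ w) 0 ≤ ξ w := min_le_left _ _
      omega
    refine ⟨hlow z, ?_⟩
    have h5 : ξ z + ∑ w ∈ univ.erase z, ξ w = (M : ℤ) := by
      rw [Finset.add_sum_erase _ _ (Finset.mem_univ z)]; exact hξ.1
    have h4 : ∑ w ∈ univ.erase z, (-C) ≤ ∑ w ∈ univ.erase z, ξ w :=
      Finset.sum_le_sum fun w _ => hlow w
    rw [Finset.sum_const, nsmul_eq_mul] at h4
    have h6 : (((univ : Finset V).erase z).card : ℤ) * C ≤ (Fintype.card V : ℤ) * C := by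
      apply mul_le_mul_of_nonneg_right _ hC0
      exact_mod_cast (Finset.card_le_card (Finset.erase_subset _ _)).trans_eq Finset.card_univ
    have h7 : (((univ : Finset V).erase z).card : ℤ) * (-C)
        = -((((univ : Finset V).erase z).card : ℤ) * C) := by ring
    rw [h7] at h4
    omega
  have hsub : {ξ : V → ℤ | admissible bank R M ξ} ⊆
      Set.pi Set.univ (fun _ : V => Set.Icc (-C) ((M : ℤ) + Fintype.card V * C)) :=
    fun ξ hξ z _ => hbound ξ hξ z
  have hfin : ({ξ : V → ℤ | admissible bank R M ξ}).Finite :=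
    (Set.Finite.pi fun _ => Set.finite_Icc _ _).subset hsub
  exact hfin.to_subtype

end AuxLemmas

theorem uniform_stationary {V : Type*} [Fintype V] [DecidableEq V] {K : ℕ} (hK : 1 ≤ K)
    (G : SimpleGraph V) (hG : G.Connected) (hN : 2 ≤ Fintype.card V)
    (bank : V → Fin K) (R : Fin K → ℕ) (M : ℕ)
    (ξ' : V → ℤ) (hξ' : admissible bank R M ξ') :
    ∑' ξ : {ξ : V → ℤ // admissible bank R M ξ},
        (1 / (Nat.card {ξ : V → ℤ // admissible bank R M ξ} : ℝ)) * step G bank R ξ.1 ξ'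
      = 1 / (Nat.card {ξ : V → ℤ // admissible bank R M ξ} : ℝ) := by
  haveI : Finite {ξ : V → ℤ // admissible bank R M ξ} := admissible_finite bank R M
  haveI : Fintype {ξ : V → ℤ // admissible bank R M ξ} := Fintype.ofFinite _
  rw [tsum_fintype, ← Finset.mul_sum]
  set Sfin : Finset (V → ℤ) :=
    Finset.univ.image (Subtype.val : {ξ : V → ℤ // admissible bank R M ξ} → (V → ℤ))
    with hSdef
  have hSmem : ∀ ξ, ξ ∈ Sfin ↔ admissible bank R M ξ := by
    intro ξ
    simp only [hSdef, Finset.mem_image, Finset.mem_univ, true_and]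
    constructor
    · rintro ⟨a, rfl⟩; exact a.2
    · intro h; exact ⟨⟨ξ, h⟩, rfl⟩
  have hrow : ∑ ξ : {ξ : V → ℤ // admissible bank R M ξ}, step G bank R ξ.1 ξ' = 1 := by
    rw [← Finset.sum_subtype Sfin hSmem (fun ξ => step G bank R ξ ξ')]
    calc ∑ ξ ∈ Sfin, step G bank R ξ ξ'
        = ∑ ξ ∈ Sfin, step G bank R ξ' ξ :=
          Finset.sum_congr rfl fun ξ hξ => step_symm G bank R ((hSmem ξ).1 hξ) hξ'
      _ = 1 := step_row_sum G bank R (exists_adj_pair G hG hN) hξ' Sfin hSmem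
  rw [hrow, mul_one]
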